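/- In the two-sided (marriage) model with social network G on M ∪ W (|M| = |W| = n), the set of locally stable matchings with respect to G equals the set of (globally) stable matchings for every profile of strict preferences if and only if the complete bipartite graph K_{M,W} is a subgraph of G. -/

import Mathlib

/-- A matching in the marriage model: agents are `Fin n ⊕ Fin n` (`inl` = men,
`inr` = women); `μ` is an involution matching men to women, with unmatched
agents sent to themselves. -/
def IsMarriageMatching (n : ℕ) (μ : Fin n ⊕ Fin n → Fin n ⊕ Fin n) : Prop :=
  (∀ x, μ (μ x) = x) ∧
  (∀ m : Fin n, μ (Sum.inl m) = Sum.inl m ∨ ∃ w, μ (Sum.inl m) = Sum.inr w) ∧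
  (∀ w : Fin n, μ (Sum.inr w) = Sum.inr w ∨ ∃ m, μ (Sum.inr w) = Sum.inl m)

/-- `(m, w)` is a blocking pair: `m` prefers `w` to his current situation
(being matched is always preferred to being single; lower rank = better), and
symmetrically for `w`. `pm m` and `pw w` are the rank functions of man `m` over
women and of woman `w` over men. -/
def IsBlockingPair (n : ℕ) (pm pw : Fin n → Equiv.Perm (Fin n))
    (μ : Fin n ⊕ Fin n → Fin n ⊕ Fin n) (m w : Fin n) : Prop :=
  (∀ w', μ (Sum.inl m) = Sum.inr w' → pm m w < pm m w') ∧
  (∀ m', μ (Sum.inr w) = Sum.inl m' → pw w m < pw w m')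

/-- Global stability: no blocking pair. -/
def IsGloballyStable (n : ℕ) (pm pw : Fin n → Equiv.Perm (Fin n))
    (μ : Fin n ⊕ Fin n → Fin n ⊕ Fin n) : Prop :=
  ∀ m w : Fin n, ¬ IsBlockingPair n pm pw μ m w

/-- Local stability w.r.t. the social network `G` on `M ∪ W`: every blocking
pair `(m, w)` is invisible — `m` is neither a neighbor of `w` nor matched to a
neighbor of `w`, and symmetrically. -/
def IsLocallyStable (n : ℕ) (G : SimpleGraph (Fin n ⊕ Fin n))
    (pm pw : Fin n → Equiv.Perm (Fin n))
    (μ : Fin n ⊕ Fin n → Fin n ⊕ Fin n) : Prop :=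
  ∀ m w : Fin n, IsBlockingPair n pm pw μ m w →
    ¬ G.Adj (Sum.inl m) (Sum.inr w) ∧
    ¬ (∃ x, G.Adj (Sum.inl m) x ∧ μ x = Sum.inr w) ∧
    ¬ (∃ x, G.Adj (Sum.inr w) x ∧ μ x = Sum.inl m)

/-!
If every man is adjacent to every woman, a blocking pair is always visible, so local and global
stability agree. Conversely, if `m` and `w` are not adjacent, leave `m` and `w` single and marry
everybody else to their first choice (`Equiv.swap m w` pairs the remaining men with the remaining
women). Then `(m, w)` is the only blocking pair, and it is invisible: since `m` and `w` are single,
nobody is matched to them, so visibility would need the missing edge.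
-/

section Stability

variable {n : ℕ} {G : SimpleGraph (Fin n ⊕ Fin n)} {pm pw : Fin n → Equiv.Perm (Fin n)}
  {μ : Fin n ⊕ Fin n → Fin n ⊕ Fin n}

theorem IsGloballyStable.isLocallyStable (h : IsGloballyStable n pm pw μ) :
    IsLocallyStable n G pm pw μ :=
  fun m w hb => absurd hb (h m w)

theorem IsLocallyStable.isGloballyStable_of_adj (h : IsLocallyStable n G pm pw μ)
    (hG : ∀ m w : Fin n, G.Adj (Sum.inl m) (Sum.inr w)) : IsGloballyStable n pm pw μ :=
  fun m w hb => (h m w hb).1 (hG m w)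

theorem isBlockingPair_of_single {m w : Fin n} (hm : μ (Sum.inl m) = Sum.inl m)
    (hw : μ (Sum.inr w) = Sum.inr w) : IsBlockingPair n pm pw μ m w :=
  ⟨fun _ h => (Sum.inl_ne_inr (hm.symm.trans h)).elim,
    fun _ h => (Sum.inr_ne_inl (hw.symm.trans h)).elim⟩

theorem not_isBlockingPair_of_partner_top_left {i j : Fin n} (hμ : μ (Sum.inl i) = Sum.inr j)
    (htop : ∀ k, pm i j ≤ pm i k) (w : Fin n) : ¬ IsBlockingPair n pm pw μ i w :=
  fun hb => (htop w).not_gt (hb.1 j hμ)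

theorem not_isBlockingPair_of_partner_top_right {i j : Fin n} (hμ : μ (Sum.inr j) = Sum.inl i)
    (htop : ∀ k, pw j i ≤ pw j k) (m : Fin n) : ¬ IsBlockingPair n pm pw μ m j :=
  fun hb => (htop m).not_gt (hb.2 i hμ)

theorem isLocallyStable_of_forall_isBlockingPair_eq (hμ : Function.Involutive μ) {m w : Fin n}
    (hm : μ (Sum.inl m) = Sum.inl m) (hw : μ (Sum.inr w) = Sum.inr w)
    (hadj : ¬ G.Adj (Sum.inl m) (Sum.inr w))
    (honly : ∀ m' w', IsBlockingPair n pm pw μ m' w' → m' = m ∧ w' = w) :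
    IsLocallyStable n G pm pw μ := by
  intro m' w' hb
  obtain ⟨rfl, rfl⟩ := honly m' w' hb
  refine ⟨hadj, ?_, ?_⟩
  · rintro ⟨x, hx, hxw⟩
    exact hadj (hμ.injective (hxw.trans hw.symm) ▸ hx)
  · rintro ⟨x, hx, hxm⟩
    exact hadj (hμ.injective (hxm.trans hm.symm) ▸ hx).symm

end Stability

def rankFirst {n : ℕ} (j : Fin n) : Equiv.Perm (Fin n) :=
  Equiv.swap ⟨0, j.pos⟩ j

theorem rankFirst_self_le {n : ℕ} (j k : Fin n) : rankFirst j j ≤ rankFirst j k := by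
  rw [rankFirst, Equiv.swap_apply_right, Fin.le_def]
  exact Nat.zero_le _

def pairOff {n : ℕ} (m w : Fin n) : Fin n ⊕ Fin n → Fin n ⊕ Fin n
  | Sum.inl i => if i = m then Sum.inl i else Sum.inr (Equiv.swap m w i)
  | Sum.inr j => if j = w then Sum.inr j else Sum.inl (Equiv.swap m w j)

section PairOff

variable {n : ℕ} (m w : Fin n)

@[simp] theorem pairOff_inl_self : pairOff m w (Sum.inl m) = Sum.inl m := by
  simp [pairOff]

@[simp] theorem pairOff_inr_self : pairOff m w (Sum.inr w) = Sum.inr w := by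
  simp [pairOff]

theorem pairOff_inl_of_ne {i : Fin n} (hi : i ≠ m) :
    pairOff m w (Sum.inl i) = Sum.inr (Equiv.swap m w i) := by
  simp [pairOff, hi]

theorem pairOff_inr_of_ne {j : Fin n} (hj : j ≠ w) :
    pairOff m w (Sum.inr j) = Sum.inl (Equiv.swap m w j) := by
  simp [pairOff, hj]

theorem isMarriageMatching_pairOff : IsMarriageMatching n (pairOff m w) := by
  refine ⟨?_, fun i => ?_, fun j => ?_⟩
  · rintro (i | j)
    · by_cases hi : i = m
      · simp [hi]
      · have hσi : Equiv.swap m w i ≠ w := by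
          rwa [Ne, Equiv.swap_apply_eq_iff, Equiv.swap_apply_right]
        rw [pairOff_inl_of_ne m w hi, pairOff_inr_of_ne m w hσi, Equiv.swap_apply_self]
    · by_cases hj : j = w
      · simp [hj]
      · have hσj : Equiv.swap m w j ≠ m := by
          rwa [Ne, Equiv.swap_apply_eq_iff, Equiv.swap_apply_left]
        rw [pairOff_inr_of_ne m w hj, pairOff_inl_of_ne m w hσj, Equiv.swap_apply_self]
  · by_cases hi : i = m
    · exact .inl (hi ▸ pairOff_inl_self m w)
    · exact .inr ⟨_, pairOff_inl_of_ne m w hi⟩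
  · by_cases hj : j = w
    · exact .inl (hj ▸ pairOff_inr_self m w)
    · exact .inr ⟨_, pairOff_inr_of_ne m w hj⟩

theorem isBlockingPair_pairOff_iff (m' w' : Fin n) :
    IsBlockingPair n (fun i => rankFirst (Equiv.swap m w i))
      (fun j => rankFirst (Equiv.swap m w j)) (pairOff m w) m' w' ↔ m' = m ∧ w' = w := by
  refine ⟨fun hb => ⟨?_, ?_⟩, ?_⟩
  · by_contra hm'
    exact not_isBlockingPair_of_partner_top_left (pairOff_inl_of_ne m w hm')
      (rankFirst_self_le _) w' hb
  · by_contra hw'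
    exact not_isBlockingPair_of_partner_top_right (pairOff_inr_of_ne m w hw')
      (rankFirst_self_le _) m' hb
  · rintro ⟨rfl, rfl⟩
    exact isBlockingPair_of_single (pairOff_inl_self m' w') (pairOff_inr_self m' w')

end PairOff

theorem exists_isLocallyStable_not_isGloballyStable {n : ℕ} {G : SimpleGraph (Fin n ⊕ Fin n)}
    {m w : Fin n} (hadj : ¬ G.Adj (Sum.inl m) (Sum.inr w)) :
    ∃ pm pw : Fin n → Equiv.Perm (Fin n), ∃ μ, IsMarriageMatching n μ ∧
      IsLocallyStable n G pm pw μ ∧ ¬ IsGloballyStable n pm pw μ := by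
  have hμ := isMarriageMatching_pairOff m w
  refine ⟨_, _, pairOff m w, hμ, ?_,
    fun h => h m w ((isBlockingPair_pairOff_iff m w m w).2 ⟨rfl, rfl⟩)⟩
  exact isLocallyStable_of_forall_isBlockingPair_eq hμ.1 (pairOff_inl_self m w)
    (pairOff_inr_self m w) hadj fun m' w' => (isBlockingPair_pairOff_iff m w m' w').1

/-- The locally stable matchings w.r.t. `G` coincide with the globally stable
matchings for every profile of strict preferences iff the complete bipartite
graph `K_{M,W}` is a subgraph of `G`. -/
theorem locally_stable_eq_stable_iff_complete_bipartite
    (n : ℕ) (G : SimpleGraph (Fin n ⊕ Fin n)) :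
    (∀ pm pw : Fin n → Equiv.Perm (Fin n),
      ∀ μ : Fin n ⊕ Fin n → Fin n ⊕ Fin n, IsMarriageMatching n μ →
        (IsLocallyStable n G pm pw μ ↔ IsGloballyStable n pm pw μ)) ↔
    (∀ m w : Fin n, G.Adj (Sum.inl m) (Sum.inr w)) := by
  refine ⟨fun h m w => ?_, fun hG pm pw μ _ => ?_⟩
  · by_contra hadj
    obtain ⟨pm, pw, μ, hμ, hloc, hglob⟩ := exists_isLocallyStable_not_isGloballyStable hadj
    exact hglob ((h pm pw μ hμ).1 hloc)
  · exact ⟨fun h => h.isGloballyStable_of_adj hG, IsGloballyStable.isLocallyStable⟩
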